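/- arXiv:2110.00032 — 3 statements merged into one kernel-verified Lean document; each statement's English description precedes it below -/
import Mathlib

section
/- For every real η > 0, 1 − η·ln(1 + 1/η) > η·((1 + 2η)·ln(1 + 1/η) − 2). -/
/-!
After clearing the positive factor `2η(η + 1)`, the inequality says `log y < (y - y⁻¹) / 2`
for `y = 1 + 1/η > 1`, which is `t < sinh t` at `t = log y > 0`.
-/

open Real

lemma Real.log_lt_half_sub_inv {y : ℝ} (hy : 1 < y) : log y < (y - y⁻¹) / 2 := by
  rw [← sinh_log (by positivity)]
  exact self_lt_sinh_iff.2 (log_pos hy)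

theorem captive_surplus_gt_comparison_gain (η : ℝ) (hη : 0 < η) :
    1 - η * Real.log (1 + 1 / η) >
      η * ((1 + 2 * η) * Real.log (1 + 1 / η) - 2) := by
  have hlog := log_lt_half_sub_inv (y := 1 + 1 / η) (by simpa using hη)
  have hrhs : (1 + 1 / η - (1 + 1 / η)⁻¹) / 2 = (1 + 2 * η) / (2 * η * (η + 1)) := by
    field_simp
    ring
  rw [hrhs, lt_div_iff₀ (by positivity)] at hlog
  linarith
end

section
/- For every integer k ≥ 1, the limit as q → 0⁺ of η(q,k) = ((1 − q/2)^{k+1} − (1 − q)^{k+1}) / (1 + (1 − q)^{k+1} − 2(1 − q/2)^{k+1}) equals +∞. -/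
/-!
Both the numerator `N q = (1 - q/2)^(k+1) - (1 - q)^(k+1)` and the denominator
`D q = 1 + (1 - q)^(k+1) - 2 (1 - q/2)^(k+1)` vanish at `q = 0`, with `N'(0) = (k+1)/2 > 0`
and `D'(0) = 0`. Since `1 - q/2` is the midpoint of `1 - q` and `1`, strict convexity of
`x ↦ x^(k+1)` makes `D q > 0` for `0 < q ≤ 1`. Hence `N q / q → (k+1)/2`
while `D q / q → 0⁺`, so `N q / D q → +∞`.
-/

open Filter Topology

theorem tendsto_div_atTop_of_hasDerivWithinAt {f g : ℝ → ℝ} {a c : ℝ} (hc : 0 < c)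
    (hf : HasDerivWithinAt f c (Set.Ioi a) a) (hg : HasDerivWithinAt g 0 (Set.Ioi a) a)
    (hfa : f a = 0) (hga : g a = 0) (hg_pos : ∀ᶠ x in 𝓝[>] a, 0 < g x) :
    Tendsto (fun x => f x / g x) (𝓝[>] a) atTop := by
  have hf_slope : Tendsto (slope f a) (𝓝[>] a) (𝓝 c) :=
    (hasDerivWithinAt_iff_tendsto_slope' (lt_irrefl a)).1 hf
  have hg_slope : Tendsto (slope g a) (𝓝[>] a) (𝓝[>] 0) := by
    refine tendsto_nhdsWithin_iff.2
      ⟨(hasDerivWithinAt_iff_tendsto_slope' (lt_irrefl a)).1 hg, ?_⟩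
    filter_upwards [hg_pos, self_mem_nhdsWithin] with x hgx hx
    rw [Set.mem_Ioi, slope_def_field, hga, sub_zero]
    exact div_pos hgx (sub_pos.2 hx)
  refine (hf_slope.pos_mul_atTop hc hg_slope.inv_tendsto_nhdsGT_zero).congr' ?_
  filter_upwards [self_mem_nhdsWithin] with x hx
  have hxa : x - a ≠ 0 := sub_ne_zero.2 (ne_of_gt hx)
  simp only [Pi.inv_apply, slope_def_field, hfa, hga, sub_zero]
  field_simp

theorem hasDerivAt_one_sub_div_pow (n : ℕ) (c : ℝ) :
    HasDerivAt (fun q : ℝ => (1 - q / c) ^ n) (-(n / c)) 0 :=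
  ((((hasDerivAt_id' (0 : ℝ)).div_const c).const_sub 1).fun_pow n).congr_deriv (by simp; ring)

theorem two_mul_pow_midpoint_lt {n : ℕ} (hn : 2 ≤ n) {x y : ℝ} (hx : 0 ≤ x) (hy : 0 ≤ y)
    (hxy : x ≠ y) : 2 * ((x + y) / 2) ^ n < x ^ n + y ^ n := by
  have h := (strictConvexOn_pow hn).2 (Set.mem_Ici.2 hx) (Set.mem_Ici.2 hy) hxy
    (by norm_num : (0 : ℝ) < 1 / 2) (by norm_num : (0 : ℝ) < 1 / 2) (by norm_num)
  rw [smul_eq_mul, smul_eq_mul, smul_eq_mul, smul_eq_mul, ← mul_add, ← mul_add,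
    one_div_mul_eq_div, one_div_mul_eq_div] at h
  linarith

theorem eta_tendsto_at_zero (k : ℕ) (hk : 1 ≤ k) :
    Tendsto (fun q : ℝ =>
        ((1 - q / 2) ^ (k + 1) - (1 - q) ^ (k + 1)) /
          (1 + (1 - q) ^ (k + 1) - 2 * (1 - q / 2) ^ (k + 1)))
      (nhdsWithin 0 (Set.Ioi 0)) atTop := by
  have h_half := hasDerivAt_one_sub_div_pow (k + 1) 2
  have h_one : HasDerivAt (fun q : ℝ => (1 - q) ^ (k + 1)) (-(k + 1 : ℕ)) 0 := by
    simpa using hasDerivAt_one_sub_div_pow (k + 1) 1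
  have h_num := (h_half.fun_sub h_one).hasDerivWithinAt (s := Set.Ioi 0)
  have h_den :=
    ((h_one.const_add 1).fun_sub (h_half.const_mul 2)).hasDerivWithinAt (s := Set.Ioi 0)
  have h_den_pos :
      ∀ᶠ q in 𝓝[>] (0 : ℝ), 0 < 1 + (1 - q) ^ (k + 1) - 2 * (1 - q / 2) ^ (k + 1) := by
    filter_upwards [Ioo_mem_nhdsGT (zero_lt_one' ℝ)] with q ⟨hq0, hq1⟩
    have h := two_mul_pow_midpoint_lt (n := k + 1) (by omega) (sub_nonneg.2 hq1.le)
      zero_le_one (by linarith : 1 - q ≠ 1)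
    rw [one_pow, show (1 - q + 1) / 2 = 1 - q / 2 by ring] at h
    linarith
  exact tendsto_div_atTop_of_hasDerivWithinAt (c := (k + 1 : ℕ) / 2) (by positivity)
    (h_num.congr_deriv (by ring)) (h_den.congr_deriv (by ring)) (by simp) (by norm_num) h_den_pos
end

section
/- Let v > 0 and for q ∈ (0,1), k ≥ 1 define η = η(q,k) = ((1 − q/2)^{k+1} − (1 − q)^{k+1})/(1 + (1 − q)^{k+1} − 2(1 − q/2)^{k+1}), and define B(q,k) = (1 − q)^k · v(1 − η ln(1 + 1/η)) + ((1 − q/2)^k − (1 − q)^k) · vη((1 + 2η)ln(1 + 1/η) − 2). If (q_k) is a sequence in (0,1) with q_k → q* > 0 as k → ∞, then B(q_k, k) → 0. -/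
open Filter

noncomputable def eta (q : ℝ) (k : ℕ) : ℝ :=
  ((1 - q / 2) ^ (k + 1) - (1 - q) ^ (k + 1)) /
    (1 + (1 - q) ^ (k + 1) - 2 * (1 - q / 2) ^ (k + 1))

noncomputable def searchBenefit (v q : ℝ) (k : ℕ) : ℝ :=
  (1 - q) ^ k * (v * (1 - eta q k * Real.log (1 + 1 / eta q k))) +
    ((1 - q / 2) ^ k - (1 - q) ^ k) *
      (v * eta q k * ((1 + 2 * eta q k) * Real.log (1 + 1 / eta q k) - 2))

lemma aux_bound (v q : ℝ) (hv : 0 < v) (hq0 : 0 < q) (hq1 : q < 1) (k : ℕ)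
    (hk : (1 - q / 2) ^ (k + 1) ≤ 1 / 4) :
    |searchBenefit v q k| ≤ 6 * v * (1 - q / 2) ^ k := by
  have h1 : (0:ℝ) < 1 - q := by linarith
  have h2 : (1:ℝ) - q < 1 - q / 2 := by linarith
  set b := (1 - q) ^ (k + 1) with hbdef
  set a := (1 - q / 2) ^ (k + 1) with hadef
  have hb : 0 < b := pow_pos h1 _
  have hab : b < a := pow_lt_pow_left₀ h2 h1.le (Nat.succ_ne_zero k)
  have hDpos : (1:ℝ)/2 ≤ 1 + b - 2 * a := by nlinarith
  have heta : eta q k = (a - b) / (1 + b - 2 * a) := rfl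
  set η := eta q k with hηdef
  have hηpos : 0 < η := by
    rw [heta]; exact div_pos (by linarith) (by linarith)
  have hη1 : η ≤ 1 := by
    rw [heta]
    rw [div_le_one (by linarith)]
    nlinarith
  set L := Real.log (1 + 1 / η) with hLdef
  have hL0 : 0 ≤ L := Real.log_nonneg (by have := one_div_pos.mpr hηpos; linarith)
  have hL : L ≤ 1 / η := by
    have h := Real.log_le_sub_one_of_pos (show (0:ℝ) < 1 + 1 / η by positivity)
    linarith
  have hηL : η * L ≤ 1 := by
    calc η * L ≤ η * (1 / η) := by exact mul_le_mul_of_nonneg_left hL hηpos.le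
    _ = 1 := by field_simp
  have hηL0 : 0 ≤ η * L := mul_nonneg hηpos.le hL0
  have hBb : (0:ℝ) ≤ (1 - q) ^ k := pow_nonneg h1.le _
  have hc : (1 - q) ^ k ≤ (1 - q / 2) ^ k := pow_le_pow_left₀ h1.le h2.le _
  have hcpos : (0:ℝ) < (1 - q / 2) ^ k := pow_pos (by linarith) _
  -- bound the second bracket
  have hE : |η * ((1 + 2 * η) * L - 2)| ≤ 5 := by
    rw [abs_le]
    constructor
    · nlinarith [mul_nonneg (mul_nonneg hηpos.le hηpos.le) hL0]
    · nlinarith [mul_nonneg hηpos.le hηL0]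
  have hF : |1 - η * L| ≤ 1 := by rw [abs_le]; constructor <;> linarith
  have hexp : searchBenefit v q k =
      (1 - q) ^ k * (v * (1 - η * L)) +
        ((1 - q / 2) ^ k - (1 - q) ^ k) * (v * (η * ((1 + 2 * η) * L - 2))) := by
    simp only [searchBenefit, ← hηdef, ← hLdef]; ring
  rw [hexp]
  calc |(1 - q) ^ k * (v * (1 - η * L)) +
        ((1 - q / 2) ^ k - (1 - q) ^ k) * (v * (η * ((1 + 2 * η) * L - 2)))|
      ≤ |(1 - q) ^ k * (v * (1 - η * L))| +
        |((1 - q / 2) ^ k - (1 - q) ^ k) * (v * (η * ((1 + 2 * η) * L - 2)))| :=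
        abs_add_le _ _
    _ ≤ (1 - q) ^ k * (v * 1) + ((1 - q / 2) ^ k - (1 - q) ^ k) * (v * 5) := by
        have hA : (0:ℝ) ≤ (1 - q / 2) ^ k - (1 - q) ^ k := by linarith
        gcongr ?_ + ?_
        · rw [abs_mul, abs_of_nonneg hBb, abs_mul, abs_of_nonneg hv.le]
          exact mul_le_mul_of_nonneg_left (mul_le_mul_of_nonneg_left hF hv.le) hBb
        · rw [abs_mul, abs_of_nonneg hA, abs_mul, abs_of_nonneg hv.le]
          exact mul_le_mul_of_nonneg_left (mul_le_mul_of_nonneg_left hE hv.le) hA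
    _ ≤ 6 * v * (1 - q / 2) ^ k := by nlinarith

theorem benefit_tendsto_zero (v : ℝ) (hv : 0 < v) (q : ℕ → ℝ)
    (hq : ∀ k, q k ∈ Set.Ioo (0 : ℝ) 1) (qstar : ℝ) (hqstar : 0 < qstar)
    (hlim : Tendsto q atTop (nhds qstar)) :
    Tendsto (fun k => searchBenefit v (q k) k) atTop (nhds 0) := by
  have hqs1 : qstar ≤ 1 := le_of_tendsto hlim (Eventually.of_forall fun k => (hq k).2.le)
  have hr0 : (0:ℝ) ≤ 1 - qstar / 4 := by linarith
  have hr1 : (1:ℝ) - qstar / 4 < 1 := by linarith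
  have hpow : Tendsto (fun k : ℕ => (1 - qstar / 4) ^ k) atTop (nhds 0) :=
    tendsto_pow_atTop_nhds_zero_of_lt_one hr0 hr1
  have hpow' : Tendsto (fun k : ℕ => (1 - qstar / 4) ^ (k + 1)) atTop (nhds 0) :=
    hpow.comp (tendsto_add_atTop_nat 1)
  have hev1 : ∀ᶠ k in atTop, qstar / 2 < q k :=
    hlim.eventually (eventually_gt_nhds (by linarith))
  have hev2 : ∀ᶠ k in atTop, (1 - qstar / 4) ^ (k + 1) ≤ 1 / 4 :=
    hpow'.eventually_le_const (by norm_num)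
  have hbound : ∀ᶠ k in atTop,
      ‖searchBenefit v (q k) k‖ ≤ 6 * v * (1 - qstar / 4) ^ k := by
    filter_upwards [hev1, hev2] with k h1 h2
    have hq0 := (hq k).1
    have hq1 := (hq k).2
    have hmono : (1 : ℝ) - q k / 2 ≤ 1 - qstar / 4 := by linarith
    have hnn : (0:ℝ) ≤ 1 - q k / 2 := by linarith
    have hk : (1 - q k / 2) ^ (k + 1) ≤ 1 / 4 :=
      le_trans (pow_le_pow_left₀ hnn hmono _) h2
    rw [Real.norm_eq_abs]
    calc |searchBenefit v (q k) k| ≤ 6 * v * (1 - q k / 2) ^ k :=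
          aux_bound v (q k) hv hq0 hq1 k hk
      _ ≤ 6 * v * (1 - qstar / 4) ^ k := by
          have := pow_le_pow_left₀ hnn hmono k
          nlinarith
  have hg : Tendsto (fun k : ℕ => 6 * v * (1 - qstar / 4) ^ k) atTop (nhds 0) := by
    simpa using hpow.const_mul (6 * v)
  exact squeeze_zero_norm' hbound hg
end
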